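/- arXiv:2208.12748 — 2 statements merged into one kernel-verified Lean document; each statement's English description precedes it below -/
import Mathlib

section
/- The minimal edge cost sequence C_k is strictly increasing, and satisfies C_{k+1} - C_k ∈ {1, 2} for all k ≥ 1, with C_{k+1} - C_k = 2 if and only if the minimal graph realizing C_k is a complete graph, i.e., if and only if k is of the form m(m-1)/2 - m + 1 for some m ≥ 3. -/
/-!
A connected graph on `N` vertices with `m` edges exists iff `N ≤ m + 1` and `m ≤ N.choose 2`:
start from a spanning tree of `K_N` and add edges. Cycle rank `k` forces `N = m - k + 1`, so
`C_k = k + g k`, where `g k` is the least `j` with `k ≤ j.choose 2`. The function `g` is monotone,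
grows by at most one once `k ≥ 1`, and grows exactly after the triangular numbers
`k = j.choose 2`, which are the cycle ranks of the complete graphs `K_{j+1}`.
-/

open SimpleGraph

/-- `EdgeCount m k` says there is a connected finite simple graph with `m` edges
and cycle rank `|E| - |V| + 1 = k` (expressed as `m + 1 = N + k`). -/
def EdgeCount (m k : ℕ) : Prop :=
  ∃ (N : ℕ) (G : SimpleGraph (Fin N)) (_ : Fintype G.edgeSet),
    G.Connected ∧ G.edgeFinset.card = m ∧ m + 1 = N + k

/-- `Cmin k` is the minimal number of edges of a connected simple graph with cycle rank `k`. -/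
noncomputable def Cmin (k : ℕ) : ℕ := sInf {m | EdgeCount m k}

open Finset

namespace SimpleGraph

variable {V : Type*}

theorem exists_le_card_edgeFinset_eq {G H : SimpleGraph V}
    [Fintype G.edgeSet] [Fintype H.edgeSet] {m : ℕ} (hGH : G ≤ H)
    (hGm : #G.edgeFinset ≤ m) (hmH : m ≤ #H.edgeFinset) :
    ∃ (G' : SimpleGraph V) (_ : Fintype G'.edgeSet), G ≤ G' ∧ #G'.edgeFinset = m := by
  obtain ⟨s, hGs, hsH, rfl⟩ :=
    exists_subsuperset_card_eq (edgeFinset_mono hGH) hGm hmH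
  have hs : (fromEdgeSet (s : Set (Sym2 V))).edgeSet = s := by
    rw [edgeSet_fromEdgeSet, sdiff_eq_left, Set.disjoint_left]
    exact fun e he => H.not_isDiag_of_mem_edgeSet (by simpa using hsH he)
  refine ⟨fromEdgeSet s, Fintype.ofFinset s (fun e => by rw [hs]; rfl), ?_, ?_⟩
  · rw [← fromEdgeSet_edgeSet (G := G)]
    exact fromEdgeSet_mono fun e he => hGs (by simpa using he)
  · congr 1
    ext e
    simp [hs]

theorem exists_connected_card_edgeFinset_eq_iff [Fintype V] (m : ℕ) :
    (∃ (G : SimpleGraph V) (_ : Fintype G.edgeSet), G.Connected ∧ #G.edgeFinset = m) ↔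
      Nonempty V ∧ Fintype.card V ≤ m + 1 ∧ m ≤ (Fintype.card V).choose 2 := by
  classical
  constructor
  · rintro ⟨G, _, hG, rfl⟩
    refine ⟨hG.nonempty, ?_, card_edgeFinset_le_card_choose_two⟩
    simpa [Nat.card_eq_fintype_card, edgeFinset_card] using hG.card_vert_le_card_edgeSet_add_one
  · rintro ⟨_, hVm, hmV⟩
    obtain ⟨T, -, hT⟩ := (connected_top (V := V)).exists_isTree_le
    have hTcard := hT.card_edgeFinset
    obtain ⟨G, _, hTG, rfl⟩ := exists_le_card_edgeFinset_eq (m := m) (le_top : T ≤ ⊤) (by omega)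
      (by rwa [card_edgeFinset_top_eq_card_choose_two])
    exact ⟨G, _, hT.connected.mono hTG, rfl⟩

end SimpleGraph

theorem Nat.succ_choose_two (n : ℕ) : (n + 1).choose 2 = n.choose 2 + n := by
  rw [Nat.choose_succ_succ', Nat.choose_one_right, add_comm]

theorem Nat.exists_le_choose_two (k : ℕ) : ∃ j : ℕ, k ≤ j.choose 2 :=
  ⟨k + 1, by rw [Nat.succ_choose_two]; omega⟩

-- A cheapest connected graph of cycle rank `k` has `chooseTwoInv k + 1` vertices.
noncomputable def chooseTwoInv (k : ℕ) : ℕ := Nat.find (Nat.exists_le_choose_two k)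

theorem gc_chooseTwoInv_choose_two : GaloisConnection chooseTwoInv (fun j : ℕ => j.choose 2) := by
  intro k j
  rw [chooseTwoInv, Nat.find_le_iff]
  exact ⟨fun ⟨i, hij, hki⟩ => hki.trans (Nat.choose_le_choose 2 hij), fun h => ⟨j, le_rfl, h⟩⟩

theorem chooseTwoInv_le_iff {k j : ℕ} : chooseTwoInv k ≤ j ↔ k ≤ j.choose 2 :=
  gc_chooseTwoInv_choose_two k j

theorem le_choose_two_chooseTwoInv (k : ℕ) : k ≤ (chooseTwoInv k).choose 2 :=
  chooseTwoInv_le_iff.1 le_rfl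

theorem chooseTwoInv_succ_le {k : ℕ} (hk : 1 ≤ k) : chooseTwoInv (k + 1) ≤ chooseTwoInv k + 1 := by
  have hpos : chooseTwoInv k ≠ 0 := fun h => by
    have := le_choose_two_chooseTwoInv k
    rw [h, Nat.choose_zero_succ] at this
    omega
  rw [chooseTwoInv_le_iff, Nat.succ_choose_two]
  have := le_choose_two_chooseTwoInv k
  omega

theorem chooseTwoInv_lt_chooseTwoInv_succ_iff (k : ℕ) :
    chooseTwoInv k < chooseTwoInv (k + 1) ↔ (chooseTwoInv k).choose 2 = k := by
  rw [← not_le, chooseTwoInv_le_iff]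
  have := le_choose_two_chooseTwoInv k
  omega

theorem choose_two_chooseTwoInv_eq_iff (k : ℕ) :
    (chooseTwoInv k).choose 2 = k ↔ ∃ j : ℕ, j.choose 2 = k := by
  refine ⟨fun h => ⟨_, h⟩, ?_⟩
  rintro ⟨j, rfl⟩
  exact le_antisymm (Nat.choose_le_choose 2 (chooseTwoInv_le_iff.2 le_rfl))
    (le_choose_two_chooseTwoInv _)

theorem edgeCount_iff (m k : ℕ) : EdgeCount m k ↔ k + chooseTwoInv k ≤ m := by
  constructor
  · rintro ⟨N, G, _, hG, hGm, hmk⟩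
    obtain ⟨hN, -, hmN⟩ := (exists_connected_card_edgeFinset_eq_iff m).1 ⟨G, _, hG, hGm⟩
    have := Fin.pos_iff_nonempty.2 hN
    obtain rfl : N = m - k + 1 := by omega
    rw [Fintype.card_fin, Nat.succ_choose_two] at hmN
    have := chooseTwoInv_le_iff.2 (show k ≤ (m - k).choose 2 by omega)
    omega
  · intro h
    have hk := chooseTwoInv_le_iff.1 (show chooseTwoInv k ≤ m - k by omega)
    obtain ⟨G, _, hG, hGm⟩ := (exists_connected_card_edgeFinset_eq_iff (V := Fin (m - k + 1)) m).2
      ⟨inferInstance, by rw [Fintype.card_fin]; omega,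
        by rw [Fintype.card_fin, Nat.succ_choose_two]; omega⟩
    exact ⟨m - k + 1, G, _, hG, hGm, by omega⟩

theorem cmin_eq_add_chooseTwoInv (k : ℕ) : Cmin k = k + chooseTwoInv k := by
  simp only [Cmin, edgeCount_iff]
  exact csInf_Ici

-- `m * (m - 1) / 2 - m + 1` is the cycle rank of the complete graph `K_m`.
theorem exists_choose_two_eq_iff {k : ℕ} (hk : 1 ≤ k) :
    (∃ j : ℕ, j.choose 2 = k) ↔ ∃ m, 3 ≤ m ∧ k = m * (m - 1) / 2 - m + 1 := by
  constructor
  · rintro ⟨j, rfl⟩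
    have hj : 2 ≤ j := by
      by_contra! h
      rw [Nat.choose_eq_zero_of_lt h] at hk
      omega
    refine ⟨j + 1, by omega, ?_⟩
    rw [Nat.triangle_succ, ← Nat.choose_two_right]
    omega
  · rintro ⟨m, hm, rfl⟩
    obtain ⟨j, rfl⟩ : ∃ j, m = j + 1 := ⟨m - 1, by omega⟩
    refine ⟨j, ?_⟩
    rw [Nat.triangle_succ, ← Nat.choose_two_right]
    have := Nat.choose_pos (show 2 ≤ j by omega)
    omega

theorem stmt_8 :
    StrictMono Cmin ∧
      ∀ k : ℕ, 1 ≤ k →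
        (Cmin (k + 1) = Cmin k + 1 ∨ Cmin (k + 1) = Cmin k + 2) ∧
          (Cmin (k + 1) = Cmin k + 2 ↔ ∃ m : ℕ, 3 ≤ m ∧ k = m * (m - 1) / 2 - m + 1) := by
  have hmono := gc_chooseTwoInv_choose_two.monotone_l
  refine ⟨strictMono_nat_of_lt_succ fun k => ?_, fun k hk => ?_⟩
  · have := hmono (k.le_add_right 1)
    rw [cmin_eq_add_chooseTwoInv, cmin_eq_add_chooseTwoInv]
    omega
  · have hle := hmono (k.le_add_right 1)
    have hsucc := chooseTwoInv_succ_le hk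
    rw [← exists_choose_two_eq_iff hk, ← choose_two_chooseTwoInv_eq_iff,
      ← chooseTwoInv_lt_chooseTwoInv_succ_iff, cmin_eq_add_chooseTwoInv, cmin_eq_add_chooseTwoInv]
    omega
end

section
/- The counting function p_R(M, L) = |Pol(M, L)| is weakly increasing in both M and L. -/
/-- `Ck k` is the minimal number of edges of a connected simple graph with cycle rank `k`,
given by `C_0 = 0` and `C_k = ⌊k + (3 + √(8k - 7))/2⌋` for `k ≥ 1`. -/
noncomputable def Ck (k : ℕ) : ℕ :=
  if k = 0 then 0 else ⌊(k : ℝ) + (3 + Real.sqrt (8 * (k : ℝ) - 7)) / 2⌋₊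

/-- The set `T = {1} ∪ {C_k : k ≥ 1}`. -/
def Tset : Set ℕ := {1} ∪ {n | ∃ k : ℕ, 1 ≤ k ∧ n = Ck k}

/-- The edge cost `C(h) = Σ a_k C_k` of a polynomial `h = Σ a_k x^k` with
nonnegative integer coefficients. -/
noncomputable def polyCost (h : Polynomial ℕ) : ℕ :=
  ∑ k ∈ h.support, h.coeff k * Ck k

/-- The Euler characteristic `L(h) = h(1) - h'(1) = Σ a_k (1 - k)`. -/
def polyEuler (h : Polynomial ℕ) : ℤ :=
  ∑ k ∈ h.support, (h.coeff k : ℤ) * (1 - (k : ℤ))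

/-- `Pol M L` is the set of polynomials with nonnegative integer coefficients,
edge cost at most `M`, and Euler characteristic `L`. -/
def Pol (M : ℕ) (L : ℤ) : Set (Polynomial ℕ) :=
  {h | polyCost h ≤ M ∧ polyEuler h = L}

lemma Ck_ge (k : ℕ) (hk : 1 ≤ k) : k ≤ Ck k := by
  unfold Ck
  rw [if_neg (by omega)]
  apply Nat.le_floor
  have hs := Real.sqrt_nonneg (8 * (k : ℝ) - 7)
  linarith

lemma term_le_cost (h : Polynomial ℕ) (k : ℕ) (hk : k ∈ h.support) :
    h.coeff k * Ck k ≤ polyCost h :=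
  Finset.single_le_sum (f := fun k => h.coeff k * Ck k) (fun i _ => Nat.zero_le _) hk

/-- Every exponent in the support of a polynomial in `Pol M L` is at most `M`. -/
lemma support_le (M : ℕ) (L : ℤ) (h : Polynomial ℕ) (hh : h ∈ Pol M L)
    (k : ℕ) (hk : k ∈ h.support) : k ≤ M := by
  rcases Nat.eq_zero_or_pos k with h0 | h1
  · omega
  · have hc : 1 ≤ h.coeff k := Nat.one_le_iff_ne_zero.2 (Polynomial.mem_support_iff.1 hk)
    have := term_le_cost h k hk
    have h2 : k ≤ h.coeff k * Ck k := le_trans (Ck_ge k h1) (Nat.le_mul_of_pos_left _ hc)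
    exact le_trans h2 (this.trans hh.1)

/-- The constant coefficient of a polynomial in `Pol M L` is at most `|L| + M`. -/
lemma coeff0_le (M : ℕ) (L : ℤ) (h : Polynomial ℕ) (hh : h ∈ Pol M L) :
    h.coeff 0 ≤ L.natAbs + M := by
  by_cases h0 : 0 ∈ h.support
  · have e : polyEuler h = L := hh.2
    unfold polyEuler at e
    rw [← Finset.add_sum_erase _ _ h0] at e
    simp only [Nat.cast_zero, sub_zero, mul_one] at e
    -- bound the remaining sum from below by -(M : ℤ)
    have hb : ∀ k ∈ h.support.erase 0,
        -((h.coeff k * Ck k : ℕ) : ℤ) ≤ (h.coeff k : ℤ) * (1 - (k : ℤ)) := by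
      intro k hk
      have hk1 : 1 ≤ k := Nat.one_le_iff_ne_zero.2 (Finset.mem_erase.1 hk).1
      have hC : (k : ℤ) ≤ (Ck k : ℤ) := by exact_mod_cast Ck_ge k hk1
      push_cast
      nlinarith [Int.ofNat_nonneg (h.coeff k)]
    have hsum : -((∑ k ∈ h.support.erase 0, h.coeff k * Ck k : ℕ) : ℤ)
        ≤ ∑ k ∈ h.support.erase 0, (h.coeff k : ℤ) * (1 - (k : ℤ)) := by
      push_cast
      rw [← Finset.sum_neg_distrib]
      apply Finset.sum_le_sum
      intro k hk
      have := hb k hk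
      push_cast at this ⊢
      linarith
    have hMs : (∑ k ∈ h.support.erase 0, h.coeff k * Ck k) ≤ M :=
      le_trans (Finset.sum_le_sum_of_subset (Finset.erase_subset _ _)) hh.1
    have : (h.coeff 0 : ℤ) ≤ L + M := by
      have hMs' : -((M : ℕ) : ℤ) ≤ ∑ k ∈ h.support.erase 0, (h.coeff k : ℤ) * (1 - (k : ℤ)) := by
        refine le_trans ?_ hsum
        simp only [neg_le_neg_iff]
        exact_mod_cast hMs
      linarith
    have hL : L ≤ |L| := le_abs_self L
    have : (h.coeff 0 : ℤ) ≤ ((L.natAbs + M : ℕ) : ℤ) := by push_cast; linarith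
    exact_mod_cast this
  · simp [Polynomial.notMem_support_iff.1 h0]

/-- Every coefficient of a polynomial in `Pol M L` is at most `|L| + M`. -/
lemma coeff_le (M : ℕ) (L : ℤ) (h : Polynomial ℕ) (hh : h ∈ Pol M L)
    (k : ℕ) : h.coeff k ≤ L.natAbs + M := by
  rcases Nat.eq_zero_or_pos k with h0 | h1
  · subst h0; exact coeff0_le M L h hh
  · by_cases hk : k ∈ h.support
    · have h2 : h.coeff k ≤ h.coeff k * Ck k := by
        have : 1 ≤ Ck k := le_trans h1 (Ck_ge k h1)
        exact Nat.le_mul_of_pos_right _ this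
      have := (le_trans h2 (term_le_cost h k hk)).trans hh.1
      omega
    · simp [Polynomial.notMem_support_iff.1 hk]

lemma pol_finite (M : ℕ) (L : ℤ) : (Pol M L).Finite := by
  set N := L.natAbs + M with hN
  apply Set.Finite.of_finite_image (f := fun h : Polynomial ℕ => fun i : Fin (M + 1) => h.coeff i)
  · apply Set.Finite.subset (Set.Finite.pi (fun _ : Fin (M + 1) => Set.finite_Iic N))
    rintro g ⟨h, hh, rfl⟩
    intro i _
    exact coeff_le M L h hh i
  · intro h1 hh1 h2 hh2 he
    ext k
    by_cases hk : k ≤ M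
    · exact congrFun he ⟨k, by omega⟩
    · have e1 : h1.coeff k = 0 := by
        by_contra hc
        exact hk (support_le M L h1 hh1 k (Polynomial.mem_support_iff.2 hc))
      have e2 : h2.coeff k = 0 := by
        by_contra hc
        exact hk (support_le M L h2 hh2 k (Polynomial.mem_support_iff.2 hc))
      rw [e1, e2]

lemma polyCost_eq_sum (h : Polynomial ℕ) : polyCost h = h.sum fun k a => a * Ck k := rfl

lemma polyEuler_eq_sum (h : Polynomial ℕ) :
    polyEuler h = h.sum fun k a => (a : ℤ) * (1 - (k : ℤ)) := rfl

lemma polyCost_add_C (h : Polynomial ℕ) (c : ℕ) : polyCost (h + Polynomial.C c) = polyCost h := by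
  rw [polyCost_eq_sum, polyCost_eq_sum]
  rw [Polynomial.sum_add_index h (Polynomial.C c) _ (fun i => by simp)
    (fun a b₁ b₂ => by ring)]
  rcases Nat.eq_zero_or_pos c with rfl | hc
  · simp
  · rw [Polynomial.sum_C_index]
    · simp [Ck]
    · simp

lemma polyEuler_add_C (h : Polynomial ℕ) (c : ℕ) :
    polyEuler (h + Polynomial.C c) = polyEuler h + c := by
  rw [polyEuler_eq_sum, polyEuler_eq_sum]
  rw [Polynomial.sum_add_index h (Polynomial.C c) _ (fun i => by simp)
    (fun a b₁ b₂ => by push_cast; ring)]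
  rcases Nat.eq_zero_or_pos c with rfl | hc
  · simp
  · rw [Polynomial.sum_C_index]
    · simp
    · simp

theorem stmt_12 :
    (∀ (M M' : ℕ) (L : ℤ), M ≤ M' → (Pol M L).ncard ≤ (Pol M' L).ncard) ∧
      ∀ (M : ℕ) (L L' : ℤ), L ≤ L' → (Pol M L).ncard ≤ (Pol M L').ncard := by
  constructor
  · intro M M' L hMM'
    apply Set.ncard_le_ncard _ (pol_finite M' L)
    intro h hh
    exact ⟨hh.1.trans hMM', hh.2⟩
  · intro M L L' hLL'
    set c := (L' - L).toNat with hc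
    refine Set.ncard_le_ncard_of_injOn (fun h => h + Polynomial.C c) ?_ ?_ (pol_finite M L')
    · intro h hh
      refine ⟨by rw [polyCost_add_C]; exact hh.1, ?_⟩
      rw [polyEuler_add_C, hh.2, hc, Int.toNat_of_nonneg (by omega)]
      ring
    · intro h1 _ h2 _ he
      have : ∀ k, h1.coeff k = h2.coeff k := by
        intro k
        have := congrArg (fun p => Polynomial.coeff p k) he
        simp only [Polynomial.coeff_add] at this
        omega
      exact Polynomial.ext this
end
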